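/- Let 0 < β₁ < β₂ < β₄ < 2, b > 0, c > 0, and suppose b ρ̃₂ + c ρ̃₁ > 1, where ρ̃_i = sin(β_iπ/2)/sin(β₄π/2). Define h₂(ω) = ω^{β₄} sin(β₄π/2) − b ω^{β₂} sin(β₂π/2) − c ω^{β₁} sin(β₁π/2). Then h₂ has exactly one zero ω₀ in (0, ∞), and 1 < ω₀ < (b ρ̃₂ + c ρ̃₁)^{1/(β₄−β₂)}. -/

import Mathlib

/-!
For `ω > 0` factor `h₂ ω = ω ^ β₄ * g ω` with
`g ω = sin (β₄π/2) - b sin (β₂π/2) ω ^ (β₂ - β₄) - c sin (β₁π/2) ω ^ (β₁ - β₄)`.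
Both exponents are negative, so `g` is strictly increasing on `(0, ∞)` and has at most one zero
there, which is also the only zero of `h₂`. Writing `K = b ρ̃₂ + c ρ̃₁` and
`M = K ^ (1 / (β₄ - β₂))`, `g 1 = sin (β₄π/2) (1 - K) < 0`, while
`M ^ (β₁ - β₄) < M ^ (β₂ - β₄) = K⁻¹` gives `g M > 0`, so the zero lies in `(1, M)` by the
intermediate value theorem.
-/

open Real Set

lemma sin_mul_pi_div_two_pos {β : ℝ} (h0 : 0 < β) (h2 : β < 2) : 0 < sin (β * π / 2) :=
  sin_pos_of_pos_of_lt_pi (by positivity) (by nlinarith [pi_pos])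

lemma strictMonoOn_sub_mul_rpow_sub_mul_rpow {a p q u v : ℝ} (hp : 0 < p) (hq : 0 < q)
    (hu : u < 0) (hv : v < 0) :
    StrictMonoOn (fun x : ℝ => a - p * x ^ u - q * x ^ v) (Ioi 0) := by
  intro x hx y _ hxy
  have hxu := rpow_lt_rpow_of_neg hx hxy hu
  have hxv := rpow_lt_rpow_of_neg hx hxy hv
  dsimp only
  nlinarith [mul_lt_mul_of_pos_left hxu hp, mul_lt_mul_of_pos_left hxv hq]

lemma continuousOn_sub_mul_rpow_sub_mul_rpow (a p q u v : ℝ) :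
    ContinuousOn (fun x : ℝ => a - p * x ^ u - q * x ^ v) (Ioi 0) := by
  have hpow (r : ℝ) : ContinuousOn (fun x : ℝ => x ^ r) (Ioi 0) := fun x hx =>
    (continuousAt_rpow_const x r (Or.inl (ne_of_gt hx))).continuousWithinAt
  exact (continuousOn_const.sub (continuousOn_const.mul (hpow u))).sub
    (continuousOn_const.mul (hpow v))

lemma sub_mul_rpow_sub_mul_rpow_pos {a p q u v M : ℝ} (hq : 0 < q) (hvu : v < u) (hM : 1 < M)
    (hMu : (p + q) * M ^ u = a) : 0 < a - p * M ^ u - q * M ^ v := by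
  nlinarith [mul_lt_mul_of_pos_left (rpow_lt_rpow_of_exponent_lt hM hvu) hq]

lemma exists_zero_mem_Ioo_unique_of_strictMonoOn {g : ℝ → ℝ} {s : Set ℝ} {x y : ℝ}
    (hxy : x ≤ y) (hs : Icc x y ⊆ s) (hmono : StrictMonoOn g s) (hcont : ContinuousOn g s)
    (hx : g x < 0) (hy : 0 < g y) :
    ∃ z ∈ Ioo x y, g z = 0 ∧ ∀ w ∈ s, g w = 0 → w = z := by
  obtain ⟨z, hz, hgz⟩ := intermediate_value_Ioo hxy (hcont.mono hs) ⟨hx, hy⟩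
  exact ⟨z, hz, hgz, fun w hw hgw =>
    hmono.injOn hw (hs (Ioo_subset_Icc_self hz)) (hgw.trans hgz.symm)⟩

theorem stmt_14 (β₁ β₂ β₄ : ℝ) (h1 : 0 < β₁) (h12 : β₁ < β₂) (h24 : β₂ < β₄)
    (h4 : β₄ < 2) (b c : ℝ) (hb : 0 < b) (hc : 0 < c)
    (ρt₁ ρt₂ : ℝ)
    (hρt₁ : ρt₁ = Real.sin (β₁ * π / 2) / Real.sin (β₄ * π / 2))
    (hρt₂ : ρt₂ = Real.sin (β₂ * π / 2) / Real.sin (β₄ * π / 2))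
    (hgt : 1 < b * ρt₂ + c * ρt₁)
    (h₂ : ℝ → ℝ)
    (hh₂ : ∀ ω : ℝ, h₂ ω =
        ω ^ β₄ * Real.sin (β₄ * π / 2) - b * ω ^ β₂ * Real.sin (β₂ * π / 2)
          - c * ω ^ β₁ * Real.sin (β₁ * π / 2)) :
    ∃ ω₀ : ℝ, (0 < ω₀ ∧ h₂ ω₀ = 0) ∧
      (∀ ω : ℝ, 0 < ω → h₂ ω = 0 → ω = ω₀) ∧
      1 < ω₀ ∧ ω₀ < (b * ρt₂ + c * ρt₁) ^ (1 / (β₄ - β₂)) := by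
  have hs₁ := sin_mul_pi_div_two_pos h1 (by linarith)
  have hs₂ := sin_mul_pi_div_two_pos (h1.trans h12) (by linarith)
  have hs₄ := sin_mul_pi_div_two_pos (by linarith) h4
  set K := b * ρt₂ + c * ρt₁
  have hK : b * sin (β₂ * π / 2) + c * sin (β₁ * π / 2) = sin (β₄ * π / 2) * K := by
    simp only [K, hρt₁, hρt₂, mul_div_assoc', ← add_div]
    exact (mul_div_cancel_left₀ _ hs₄.ne').symm
  set g := fun ω : ℝ => sin (β₄ * π / 2) - b * sin (β₂ * π / 2) * ω ^ (β₂ - β₄)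
    - c * sin (β₁ * π / 2) * ω ^ (β₁ - β₄)
  have hh₂g (ω : ℝ) (hω : 0 < ω) : h₂ ω = ω ^ β₄ * g ω := by
    simp only [g, hh₂, rpow_sub hω]
    field_simp [(rpow_pos_of_pos hω β₄).ne']
  set M := K ^ (1 / (β₄ - β₂)) with hM_def
  have hM : 1 < M :=
    (one_lt_rpow_iff_of_pos (by linarith)).2 (Or.inl ⟨hgt, by simp [h24]⟩)
  have hMK : M ^ (β₂ - β₄) = K⁻¹ := by
    rw [hM_def, ← rpow_mul (by linarith), ← neg_sub β₄, mul_neg, one_div_mul_cancel (by linarith),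
      rpow_neg_one]
  have hg_one : g 1 < 0 := by simp only [g, one_rpow]; nlinarith
  have hg_M : 0 < g M := sub_mul_rpow_sub_mul_rpow_pos (mul_pos hc hs₁) (by linarith) hM
    (by rw [hMK, hK, mul_inv_cancel_right₀ (by linarith)])
  have hg_mono : StrictMonoOn g (Ioi 0) := strictMonoOn_sub_mul_rpow_sub_mul_rpow
    (mul_pos hb hs₂) (mul_pos hc hs₁) (by linarith) (by linarith)
  obtain ⟨ω₀, hω₀, hgω₀, hunique⟩ := exists_zero_mem_Ioo_unique_of_strictMonoOn hM.le
    (fun x hx => one_pos.trans_le hx.1) hg_mono (continuousOn_sub_mul_rpow_sub_mul_rpow _ _ _ _ _)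
    hg_one hg_M
  have hω₀pos : 0 < ω₀ := one_pos.trans hω₀.1
  refine ⟨ω₀, ⟨hω₀pos, by rw [hh₂g ω₀ hω₀pos, hgω₀, mul_zero]⟩, fun ω hω hzero => ?_, hω₀⟩
  rw [hh₂g ω hω] at hzero
  exact hunique ω hω ((mul_eq_zero.1 hzero).resolve_left (rpow_pos_of_pos hω β₄).ne')
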